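/- arXiv:1406.4950 — 5 statements merged into one kernel-verified Lean document; each statement's English description precedes it below -/
import Mathlib

section
/- Let 1 ≤ p < ∞ and let M be an Orlicz function satisfying the Δ₂-condition at 0. Then M is equivalent on the segment [0,1] to a p-convex Orlicz function if and only if there exists a constant C > 0 such that M(st) ≤ C·s^p·M(t) for all 0 < s < 1 and all 0 < t ≤ 1. -/
/-!
If `N` is `p`-convex with `N 0 = 0`, then `v ↦ N (v ^ (1/p))` is convex and vanishes at `0`, so
`N (s t) ≤ s^p N t`; the same estimate passes, with a worse constant, to any `M` equivalent to `N`.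

Conversely, the estimate `M (s t) ≤ C s^p M t` says that `M u / u^p` is almost increasing on
`(0,1]`, so its increasing envelope `ψ u = sup_{0<w≤u} M w / w^p` is comparable to it. Put
`N t = ∫₀^{t^p} ψ (v ^ (1/p)) dv`: as a function of `t^p` it is the primitive of an increasing
function, hence convex. Bounding the integrand by its value at the right end gives
`N t ≤ t^p ψ t ≤ C M t`, and integrating only over `[(t/2)^p, t^p]` gives
`N t ≥ (2^p - 1) (t/2)^p ψ (t/2) ≥ M (t/2)`. The `Δ₂`-condition, extended from a neighbourhood of
`0` to `(0,1]` because `M > 0` on `(0,∞)`, bounds `M t` by a multiple of `M (t/2)`.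
-/

open MeasureTheory Set

noncomputable section

/-- An Orlicz function: increasing, convex on `[0,∞)` with `M 0 = 0`. -/
def IsOrliczFunction (M : ℝ → ℝ) : Prop :=
  MonotoneOn M (Ici 0) ∧ ConvexOn ℝ (Ici 0) M ∧ M 0 = 0

/-- `M` is `r`-convex: `t ↦ M (t ^ (1/r))` is convex on `[0,∞)`. -/
def RConvex (r : ℝ) (M : ℝ → ℝ) : Prop :=
  ConvexOn ℝ (Ici 0) fun t : ℝ => M (t ^ (1 / r))

/-- The `Δ₂`-condition at zero. -/
def Delta2AtZero (M : ℝ → ℝ) : Prop :=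
  ∃ u₀ > (0:ℝ), ∃ C > (0:ℝ), ∀ u : ℝ, 0 < u → u < u₀ → M (2 * u) ≤ C * M u

/-- Two functions are equivalent on the segment `[0,1]`. -/
def EquivOn01 (M N : ℝ → ℝ) : Prop :=
  ∃ C > (0:ℝ), ∀ t ∈ Icc (0:ℝ) 1, C⁻¹ * M t ≤ N t ∧ N t ≤ C * M t

section MonotonePrimitive

open intervalIntegral

variable {f : ℝ → ℝ} {a b : ℝ}

theorem MonotoneOn.sub_mul_le_integral (hf : MonotoneOn f (Icc a b)) (hab : a ≤ b) :
    (b - a) * f a ≤ ∫ x in a..b, f x := by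
  have hi : IntervalIntegrable f volume a b := (uIcc_of_le hab ▸ hf).intervalIntegrable
  simpa using integral_mono_on hab intervalIntegrable_const hi
    fun x hx ↦ hf (left_mem_Icc.2 hab) hx hx.1

theorem MonotoneOn.integral_le_sub_mul (hf : MonotoneOn f (Icc a b)) (hab : a ≤ b) :
    ∫ x in a..b, f x ≤ (b - a) * f b := by
  have hi : IntervalIntegrable f volume a b := (uIcc_of_le hab ▸ hf).intervalIntegrable
  simpa using integral_mono_on hab hi intervalIntegrable_const
    fun x hx ↦ hf hx (right_mem_Icc.2 hab) hx.2

theorem MonotoneOn.integral_sub_integral (hf : MonotoneOn f (Ici a)) {x y : ℝ}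
    (hx : a ≤ x) (hy : a ≤ y) : (∫ t in a..y, f t) - ∫ t in a..x, f t = ∫ t in x..y, f t :=
  integral_interval_sub_left (hf.mono (uIcc_of_le hy ▸ Icc_subset_Ici_self)).intervalIntegrable
    (hf.mono (uIcc_of_le hx ▸ Icc_subset_Ici_self)).intervalIntegrable

theorem MonotoneOn.convexOn_integral (hf : MonotoneOn f (Ici a)) :
    ConvexOn ℝ (Ici a) fun x ↦ ∫ t in a..x, f t := by
  refine convexOn_of_slope_mono_adjacent (convex_Ici a) fun {x y z} hx hz hxy hyz ↦ ?_
  have hy : a ≤ y := hx.out.trans hxy.le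
  rw [hf.integral_sub_integral hx hy, hf.integral_sub_integral hy hz.out,
    div_le_div_iff₀ (sub_pos.2 hxy) (sub_pos.2 hyz)]
  have h₁ := (hf.mono (Icc_subset_Ici_iff hxy.le |>.2 hx)).integral_le_sub_mul hxy.le
  have h₂ := (hf.mono (Icc_subset_Ici_iff hyz.le |>.2 hy)).sub_mul_le_integral hyz.le
  calc (∫ t in x..y, f t) * (z - y) ≤ (y - x) * f y * (z - y) := by gcongr
    _ = (z - y) * f y * (y - x) := by ring
    _ ≤ (∫ t in y..z, f t) * (y - x) := by gcongr

theorem monotoneOn_integral_of_nonneg (hf : MonotoneOn f (Ici a)) (hf0 : ∀ x, a ≤ x → 0 ≤ f x) :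
    MonotoneOn (fun x ↦ ∫ t in a..x, f t) (Ici a) := by
  intro x hx y hy hxy
  rw [← sub_nonneg, hf.integral_sub_integral hx hy]
  exact integral_nonneg hxy fun t ht ↦ hf0 t (hx.out.trans ht.1)

end MonotonePrimitive

theorem ConvexOn.map_mul_le_of_map_zero {G : ℝ → ℝ} (hG : ConvexOn ℝ (Ici 0) G) (hG0 : G 0 = 0)
    {a x : ℝ} (ha0 : 0 ≤ a) (ha1 : a ≤ 1) (hx : 0 ≤ x) : G (a * x) ≤ a * G x := by
  simpa [hG0] using hG.2 hx (self_mem_Ici : (0:ℝ) ∈ Ici 0) ha0 (sub_nonneg.2 ha1) (by ring)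

theorem RConvex.map_mul_le {p : ℝ} (hp : 0 < p) {N : ℝ → ℝ} (hN : RConvex p N) (hN0 : N 0 = 0)
    {s t : ℝ} (hs0 : 0 ≤ s) (hs1 : s ≤ 1) (ht : 0 ≤ t) : N (s * t) ≤ s ^ p * N t := by
  have hroot : ∀ {x : ℝ}, 0 ≤ x → (x ^ p) ^ (1 / p) = x := fun hx ↦ by
    rw [one_div, Real.rpow_rpow_inv hx hp.ne']
  have key := hN.map_mul_le_of_map_zero (by simp [Real.zero_rpow, hp.ne', hN0])
    (Real.rpow_nonneg hs0 p) (Real.rpow_le_one hs0 hs1 hp.le) (Real.rpow_nonneg ht p)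
  rwa [← Real.mul_rpow hs0 ht, hroot (mul_nonneg hs0 ht), hroot ht] at key

def LowerPEstimate (p C : ℝ) (M : ℝ → ℝ) : Prop :=
  ∀ s t : ℝ, 0 < s → s < 1 → 0 < t → t ≤ 1 → M (s * t) ≤ C * s ^ p * M t

theorem exists_lowerPEstimate_of_equivOn01 {p : ℝ} (hp : 0 < p) {M N : ℝ → ℝ}
    (hN : RConvex p N) (hN0 : N 0 = 0) (hMN : EquivOn01 M N) : ∃ C > 0, LowerPEstimate p C M := by
  obtain ⟨C, hC, hCMN⟩ := hMN
  refine ⟨C * C, by positivity, fun s t hs hs1 ht ht1 ↦ ?_⟩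
  have hst : s * t ∈ Icc (0:ℝ) 1 := ⟨by positivity, by nlinarith⟩
  have hM_le : M (s * t) ≤ C * N (s * t) := by
    have := (hCMN _ hst).1
    rwa [inv_mul_le_iff₀ hC] at this
  calc M (s * t) ≤ C * N (s * t) := hM_le
    _ ≤ C * (s ^ p * N t) := by gcongr; exact hN.map_mul_le hp hN0 hs.le hs1.le ht.le
    _ ≤ C * (s ^ p * (C * M t)) := by gcongr; exact (hCMN t ⟨ht.le, ht1⟩).2
    _ = C * C * s ^ p * M t := by ring

namespace LowerPEstimate

variable {p C : ℝ} {M : ℝ → ℝ}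

theorem mono_const (h : LowerPEstimate p C M) {D : ℝ} (hCD : C ≤ D)
    (hMnn : ∀ t, 0 ≤ t → 0 ≤ M t) : LowerPEstimate p D M := fun s t hs hs1 ht ht1 ↦
  (h s t hs hs1 ht ht1).trans <| by
    have := hMnn t ht.le
    gcongr

theorem div_rpow_le (h : LowerPEstimate p C M) (hC : 1 ≤ C) {w u : ℝ} (hw : 0 < w) (hwu : w ≤ u)
    (hu : u ≤ 1) (hMu : 0 ≤ M u) : M w / w ^ p ≤ C * (M u / u ^ p) := by
  have hu0 : 0 < u := hw.trans_le hwu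
  rcases hwu.lt_or_eq with hlt | rfl
  · have hs := h (w / u) u (div_pos hw hu0) ((div_lt_one hu0).2 hlt) hu0 hu
    rw [div_mul_cancel₀ _ hu0.ne', Real.div_rpow hw.le hu0.le] at hs
    rw [div_le_iff₀ (Real.rpow_pos_of_pos hw p)]
    calc M w ≤ C * (w ^ p / u ^ p) * M u := hs
      _ = C * (M u / u ^ p) * w ^ p := by ring
  · have : 0 ≤ M w / w ^ p := by positivity
    nlinarith

end LowerPEstimate

/-- Vanishes for `u ≤ 0`, where the set is empty and `sSup ∅ = 0`. -/
def pEnvelope (p : ℝ) (M : ℝ → ℝ) (u : ℝ) : ℝ :=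
  sSup ((fun w ↦ M w / w ^ p) '' Ioc 0 (min u 1))

section pEnvelope

variable {p C : ℝ} {M : ℝ → ℝ}

theorem pEnvelope_nonneg (hMnn : ∀ t, 0 ≤ t → 0 ≤ M t) (u : ℝ) : 0 ≤ pEnvelope p M u := by
  refine Real.sSup_nonneg ?_
  rintro _ ⟨w, ⟨hw, -⟩, rfl⟩
  have := hMnn w hw.le
  positivity

variable (hMnn : ∀ t, 0 ≤ t → 0 ≤ M t) (h : LowerPEstimate p C M) (hC : 1 ≤ C)
include hMnn h hC

theorem bddAbove_pEnvelope_set (u : ℝ) :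
    BddAbove ((fun w ↦ M w / w ^ p) '' Ioc 0 (min u 1)) := by
  refine ⟨C * (M 1 / 1 ^ p), ?_⟩
  rintro _ ⟨w, ⟨hw, hwu⟩, rfl⟩
  exact h.div_rpow_le hC hw (hwu.trans (min_le_right u 1)) le_rfl (hMnn 1 zero_le_one)

theorem monotone_pEnvelope : Monotone (pEnvelope p M) := by
  intro u v huv
  rcases le_or_gt (min u 1) 0 with hu | hu
  · rw [pEnvelope, Ioc_eq_empty hu.not_gt, image_empty, Real.sSup_empty]
    exact pEnvelope_nonneg hMnn v
  · exact csSup_le_csSup (bddAbove_pEnvelope_set hMnn h hC v)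
      ((nonempty_Ioc.2 hu).image _) (image_mono (Ioc_subset_Ioc_right (min_le_min_right 1 huv)))

theorem div_rpow_le_pEnvelope {u : ℝ} (hu0 : 0 < u) (hu1 : u ≤ 1) :
    M u / u ^ p ≤ pEnvelope p M u :=
  le_csSup (bddAbove_pEnvelope_set hMnn h hC u) ⟨u, ⟨hu0, le_min le_rfl hu1⟩, rfl⟩

theorem pEnvelope_le {u : ℝ} (hu0 : 0 < u) (hu1 : u ≤ 1) :
    pEnvelope p M u ≤ C * (M u / u ^ p) := by
  have hMu := hMnn u hu0.le
  refine Real.sSup_le ?_ (by positivity)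
  rintro _ ⟨w, ⟨hw, hwu⟩, rfl⟩
  exact h.div_rpow_le hC hw (hwu.trans (min_le_left u 1)) hu1 hMu

end pEnvelope

def pConvexification (p : ℝ) (M : ℝ → ℝ) (t : ℝ) : ℝ :=
  ∫ v in (0:ℝ)..t ^ p, pEnvelope p M (v ^ (1 / p))

section pConvexification

variable {p C : ℝ} {M : ℝ → ℝ}
  (hMnn : ∀ t, 0 ≤ t → 0 ≤ M t) (h : LowerPEstimate p C M) (hC : 1 ≤ C)
include hMnn h hC

theorem monotoneOn_pEnvelope_rpow (hp : 0 < p) :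
    MonotoneOn (fun v ↦ pEnvelope p M (v ^ (1 / p))) (Ici 0) := fun _ hv _ _ hvw ↦
  monotone_pEnvelope hMnn h hC (Real.rpow_le_rpow hv hvw (by positivity))

theorem isOrliczFunction_pConvexification (hp : 1 ≤ p) :
    IsOrliczFunction (pConvexification p M) := by
  have hp0 : 0 < p := by linarith
  have hf := monotoneOn_pEnvelope_rpow hMnn h hC hp0
  have hG := monotoneOn_integral_of_nonneg hf fun v _ ↦ pEnvelope_nonneg hMnn _
  have himage : (fun t : ℝ ↦ t ^ p) '' Ici 0 = Ici 0 :=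
    (image_subset_iff.2 fun t ht ↦ Real.rpow_nonneg ht p).antisymm fun v hv ↦
      ⟨v ^ p⁻¹, Real.rpow_nonneg hv _, Real.rpow_inv_rpow hv hp0.ne'⟩
  refine ⟨fun s hs t ht hst ↦ ?_, ?_, ?_⟩
  · exact hG (Real.rpow_nonneg hs p) (Real.rpow_nonneg ht p) (Real.rpow_le_rpow hs hst hp0.le)
  · have hGconv := hf.convexOn_integral
    rw [← himage] at hGconv hG
    exact hGconv.comp (convexOn_rpow hp) hG
  · simp [pConvexification, Real.zero_rpow hp0.ne']

theorem rConvex_pConvexification (hp : 0 < p) : RConvex p (pConvexification p M) :=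
  (monotoneOn_pEnvelope_rpow hMnn h hC hp).convexOn_integral.congr fun v hv ↦ by
    simp only [pConvexification]
    rw [one_div, Real.rpow_inv_rpow hv.out hp.ne']

theorem pConvexification_le (hp : 0 < p) {t : ℝ} (ht0 : 0 < t) (ht1 : t ≤ 1) :
    pConvexification p M t ≤ C * M t := by
  have htp : 0 < t ^ p := Real.rpow_pos_of_pos ht0 p
  have hf := monotoneOn_pEnvelope_rpow hMnn h hC hp
  have hint := (hf.mono Icc_subset_Ici_self).integral_le_sub_mul htp.le
  rw [sub_zero, one_div, Real.rpow_rpow_inv ht0.le hp.ne'] at hint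
  calc pConvexification p M t ≤ t ^ p * pEnvelope p M t := by
        simpa only [pConvexification, one_div] using hint
    _ ≤ t ^ p * (C * (M t / t ^ p)) := by gcongr; exact pEnvelope_le hMnn h hC ht0 ht1
    _ = C * M t := by field_simp

theorem le_pConvexification (hp : 1 ≤ p) {t : ℝ} (ht0 : 0 < t) (ht1 : t ≤ 1) :
    M (t / 2) ≤ pConvexification p M t := by
  have hp0 : 0 < p := by linarith
  have ht2 : 0 < t / 2 := by linarith
  set a := (t / 2) ^ p
  have ha : 0 < a := Real.rpow_pos_of_pos ht2 p
  have hta : t ^ p = 2 ^ p * a := by rw [← Real.mul_rpow zero_le_two ht2.le]; ring_nf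
  have h2p : 2 ≤ (2:ℝ) ^ p := by simpa using Real.rpow_le_rpow_of_exponent_le one_le_two hp
  have hab : a ≤ t ^ p := by rw [hta]; nlinarith
  have hf := monotoneOn_pEnvelope_rpow hMnn h hC hp0
  have hfa : pEnvelope p M (a ^ (1 / p)) = pEnvelope p M (t / 2) := by
    rw [one_div, Real.rpow_rpow_inv ht2.le hp0.ne']
  have hsplit : pConvexification p M t =
      (∫ v in (0:ℝ)..a, pEnvelope p M (v ^ (1 / p))) +
        ∫ v in a..t ^ p, pEnvelope p M (v ^ (1 / p)) := by
    rw [← hf.integral_sub_integral ha.le (ha.le.trans hab), pConvexification, add_sub_cancel]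
  have hhead : 0 ≤ ∫ v in (0:ℝ)..a, pEnvelope p M (v ^ (1 / p)) :=
    intervalIntegral.integral_nonneg ha.le fun v _ ↦ pEnvelope_nonneg hMnn _
  have htail := (hf.mono (Icc_subset_Ici_iff hab |>.2 ha.le)).sub_mul_le_integral hab
  rw [hfa] at htail
  have hMt2 := hMnn _ ht2.le
  calc M (t / 2) ≤ (2 ^ p - 1) * M (t / 2) := le_mul_of_one_le_left hMt2 (by linarith)
    _ = (t ^ p - a) * (M (t / 2) / a) := by rw [hta]; field_simp
    _ ≤ (t ^ p - a) * pEnvelope p M (t / 2) := by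
        gcongr
        exact div_rpow_le_pEnvelope hMnn h hC ht2 (by linarith)
    _ ≤ pConvexification p M t := by linarith

end pConvexification

theorem IsOrliczFunction.nonneg {M : ℝ → ℝ} (hM : IsOrliczFunction M) {t : ℝ} (ht : 0 ≤ t) :
    0 ≤ M t :=
  hM.2.2 ▸ hM.1 self_mem_Ici ht ht

theorem pos_of_bijOn_Ici {M : ℝ → ℝ} (hM : BijOn M (Ici 0) (Ici 0)) (hM0 : M 0 = 0) {u : ℝ}
    (hu : 0 < u) : 0 < M u :=
  (hM.mapsTo hu.le).out.lt_of_ne fun h ↦ hu.ne' <| hM.injOn hu.le self_mem_Ici <| by rw [← h, hM0]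

theorem Delta2AtZero.exists_le_mul_half {M : ℝ → ℝ} (hΔ : Delta2AtZero M)
    (hmono : MonotoneOn M (Ici 0)) (hpos : ∀ u, 0 < u → 0 < M u) :
    ∃ K > 0, ∀ t, 0 < t → t ≤ 1 → M t ≤ K * M (t / 2) := by
  obtain ⟨u₀, hu₀, C, hC, hΔ⟩ := hΔ
  have hMu₀ := hpos u₀ hu₀
  refine ⟨max C (M 1 / M u₀), lt_max_of_lt_left hC, fun t ht ht1 ↦ ?_⟩
  have ht2 : 0 < t / 2 := half_pos ht
  have hMt2 := (hpos _ ht2).le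
  rcases lt_or_ge (t / 2) u₀ with hsmall | hlarge
  · calc M t = M (2 * (t / 2)) := by ring_nf
      _ ≤ C * M (t / 2) := hΔ _ ht2 hsmall
      _ ≤ _ := by gcongr; exact le_max_left _ _
  · have := (hpos 1 one_pos).le
    calc M t ≤ M 1 := hmono ht.le (mem_Ici.2 zero_le_one) ht1
      _ = M 1 / M u₀ * M u₀ := (div_mul_cancel₀ _ hMu₀.ne').symm
      _ ≤ M 1 / M u₀ * M (t / 2) := by gcongr; exact hmono hu₀.le ht2.le hlarge
      _ ≤ _ := by gcongr; exact le_max_right _ _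

theorem equivOn01_of_le_mul {M N : ℝ → ℝ} {K : ℝ} (hK : 0 < K) (hM0 : M 0 = 0) (hN0 : N 0 = 0)
    (hMN : ∀ t, 0 < t → t ≤ 1 → M t ≤ K * N t) (hNM : ∀ t, 0 < t → t ≤ 1 → N t ≤ K * M t) :
    EquivOn01 M N := by
  refine ⟨K, hK, fun t ⟨ht0, ht1⟩ ↦ ?_⟩
  rcases ht0.eq_or_lt with rfl | ht0
  · simp [hM0, hN0]
  · exact ⟨(inv_mul_le_iff₀ hK).2 (hMN t ht0 ht1), hNM t ht0 ht1⟩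

theorem exists_rConvex_equivOn01_of_lowerPEstimate {p C : ℝ} (hp : 1 ≤ p) {M : ℝ → ℝ}
    (hM : IsOrliczFunction M) (hMpos : ∀ u, 0 < u → 0 < M u) (hΔ₂ : Delta2AtZero M)
    (h : LowerPEstimate p C M) : ∃ N, IsOrliczFunction N ∧ RConvex p N ∧ EquivOn01 M N := by
  have hMnn : ∀ t, 0 ≤ t → 0 ≤ M t := fun _ ↦ hM.nonneg
  have hC : 1 ≤ max C 1 := le_max_right C 1
  have h' := h.mono_const (le_max_left C 1) hMnn
  set N := pConvexification p M
  have hN : IsOrliczFunction N := isOrliczFunction_pConvexification hMnn h' hC hp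
  obtain ⟨K, hK, hMK⟩ := hΔ₂.exists_le_mul_half hM.1 hMpos
  have hMN : ∀ t, 0 < t → t ≤ 1 → M t ≤ max (max C 1) K * N t := fun t ht0 ht1 ↦
    calc M t ≤ K * M (t / 2) := hMK t ht0 ht1
      _ ≤ K * N t := by gcongr; exact le_pConvexification hMnn h' hC hp ht0 ht1
      _ ≤ _ := mul_le_mul_of_nonneg_right (le_max_right _ _) (hN.nonneg ht0.le)
  have hNM : ∀ t, 0 < t → t ≤ 1 → N t ≤ max (max C 1) K * M t := fun t ht0 ht1 ↦
    calc N t ≤ max C 1 * M t := pConvexification_le hMnn h' hC (by linarith) ht0 ht1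
      _ ≤ _ := mul_le_mul_of_nonneg_right (le_max_left _ _) (hMnn t ht0.le)
  exact ⟨N, hN, rConvex_pConvexification hMnn h' hC (by linarith),
    equivOn01_of_le_mul (lt_max_of_lt_right hK) hM.2.2 hN.2.2 hMN hNM⟩

theorem equivalent_to_p_convex_iff_general
    (p : ℝ) (hp : 1 ≤ p)
    (M : ℝ → ℝ) (hM : IsOrliczFunction M)
    (hMbij : Set.BijOn M (Ici 0) (Ici 0))
    (hΔ₂ : Delta2AtZero M) :
    (∃ N : ℝ → ℝ, IsOrliczFunction N ∧ RConvex p N ∧ EquivOn01 M N) ↔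
      (∃ C > (0:ℝ), ∀ s t : ℝ, 0 < s → s < 1 → 0 < t → t ≤ 1 →
        M (s * t) ≤ C * s ^ p * M t) := by
  constructor
  · rintro ⟨N, hN, hNp, hMN⟩
    exact exists_lowerPEstimate_of_equivOn01 (by linarith) hNp hN.2.2 hMN
  · rintro ⟨C, -, hC⟩
    exact exists_rConvex_equivOn01_of_lowerPEstimate hp hM
      (fun _ ↦ pos_of_bijOn_Ici hMbij hM.2.2) hΔ₂ hC

/-- An Orlicz function `M` satisfying the `Δ₂`-condition at `0` is equivalent on `[0,1]` to a
`p`-convex Orlicz function iff `M(st) ≤ C s^p M(t)` for all `0 < s < 1`, `0 < t ≤ 1`. -/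
theorem equivalent_to_p_convex_iff
    (p : ℝ) (hp : 1 ≤ p)
    (M : ℝ → ℝ) (hM : IsOrliczFunction M) (hM1 : M 1 = 1)
    (hMbij : Set.BijOn M (Ici 0) (Ici 0))
    (hΔ₂ : Delta2AtZero M) :
    (∃ N : ℝ → ℝ, IsOrliczFunction N ∧ RConvex p N ∧ EquivOn01 M N) ↔
      (∃ C > (0:ℝ), ∀ s t : ℝ, 0 < s → s < 1 → 0 < t → t ≤ 1 →
        M (s * t) ≤ C * s ^ p * M t) :=
  equivalent_to_p_convex_iff_general p hp M hM hMbij hΔ₂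
end
end

section
/- Let C > 0, let φ : (0,1) → (0,∞) be increasing and satisfy ∫₀ᵗ φ(s)/s ds ≤ C·φ(t) for all t ∈ (0,1), and let 0 < s₀ < e^{−2C}. Then φ(s₀·t) ≤ φ(t)/2 for every t ∈ (0,1). -/
open MeasureTheory Set

noncomputable section

/-- If `φ` is positive and increasing on `(0,1)` with `∫₀ᵗ φ(s)/s ds ≤ C φ(t)` for all
`t ∈ (0,1)`, and `0 < s₀ < e^{-2C}`, then `φ(s₀ t) ≤ φ(t)/2` for every `t ∈ (0,1)`. -/
theorem increasing_cesaro_contraction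
    (C : ℝ) (hC : 0 < C) (φ : ℝ → ℝ)
    (hmono : MonotoneOn φ (Ioo 0 1))
    (hpos : ∀ t ∈ Ioo (0:ℝ) 1, 0 < φ t)
    (hint : ∀ t ∈ Ioo (0:ℝ) 1, IntegrableOn (fun s => φ s / s) (Ioo 0 t))
    (hbound : ∀ t ∈ Ioo (0:ℝ) 1, (∫ s in Ioo (0:ℝ) t, φ s / s) ≤ C * φ t)
    (s₀ : ℝ) (hs₀ : 0 < s₀) (hs₀' : s₀ < Real.exp (-(2 * C))) :
    ∀ t ∈ Ioo (0:ℝ) 1, φ (s₀ * t) ≤ φ t / 2 := by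
  intro t ht
  obtain ⟨ht0, ht1⟩ := ht
  set a := s₀ * t with ha_def
  have hs₀1 : s₀ < 1 := lt_trans hs₀' (by
    rw [Real.exp_lt_one_iff]; linarith)
  have ha0 : 0 < a := mul_pos hs₀ ht0
  have hat : a < t := by
    have : s₀ * t < 1 * t := by nlinarith
    simpa using this
  have ha : a ∈ Ioo (0:ℝ) 1 := ⟨ha0, hat.trans ht1⟩
  have hφa : 0 < φ a := hpos a ha
  -- log bound: -log s₀ > 2C
  have hlog : 2 * C < - Real.log s₀ := by
    have := Real.log_lt_log hs₀ hs₀'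
    rw [Real.log_exp] at this
    linarith
  -- integrability on Ioo a t
  have hIsub : Ioo a t ⊆ Ioo (0:ℝ) t := Ioo_subset_Ioo (le_of_lt ha0) le_rfl
  have hint_t : IntegrableOn (fun s => φ s / s) (Ioo 0 t) := hint t ⟨ht0, ht1⟩
  have hint_at : IntegrableOn (fun s => φ s / s) (Ioo a t) := hint_t.mono_set hIsub
  -- integrability of constant/s on Ioo a t
  have hint_c : IntegrableOn (fun s => φ a / s) (Ioo a t) := by
    have : IntegrableOn (fun s => φ a / s) (Icc a t) :=
      (continuousOn_const.div continuousOn_id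
        (fun y hy => ne_of_gt (lt_of_lt_of_le ha0 hy.1))).integrableOn_Icc
    exact this.mono_set Ioo_subset_Icc_self
  -- pointwise bound on Ioo a t
  have hpt : ∀ s ∈ Ioo a t, φ a / s ≤ φ s / s := by
    intro s hs
    have hs0 : 0 < s := lt_trans ha0 hs.1
    have hsIoo : s ∈ Ioo (0:ℝ) 1 := ⟨hs0, hs.2.trans ht1⟩
    have h1 : φ a ≤ φ s := hmono ha hsIoo (le_of_lt hs.1)
    gcongr
  -- value of the constant integral
  have hval : (∫ s in Ioo a t, φ a / s) = φ a * (- Real.log s₀) := by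
    have h1 : (∫ s in Ioo a t, φ a / s) = ∫ s in Ioc a t, φ a / s :=
      (MeasureTheory.integral_Ioc_eq_integral_Ioo).symm
    have h2 : (∫ s in Ioc a t, φ a / s) = ∫ s in a..t, φ a / s :=
      (intervalIntegral.integral_of_le (le_of_lt hat)).symm
    have h3 : (∫ s in a..t, φ a / s) = φ a * ∫ s in a..t, 1 / s := by
      simp_rw [div_eq_mul_inv, one_mul]
      exact intervalIntegral.integral_const_mul _ _
    have h0 : (0:ℝ) ∉ uIcc a t := by
      rw [uIcc_of_le (le_of_lt hat)]
      intro h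
      exact absurd h.1 (not_le.mpr ha0)
    have h4 : (∫ s in a..t, 1 / s) = Real.log (t / a) := integral_one_div h0
    have h5 : Real.log (t / a) = - Real.log s₀ := by
      rw [Real.log_div (ne_of_gt ht0) (ne_of_gt ha0), ha_def,
        Real.log_mul (ne_of_gt hs₀) (ne_of_gt ht0)]
      ring
    rw [h1, h2, h3, h4, h5]
  -- compare integrals
  have hmono_int : (∫ s in Ioo a t, φ a / s) ≤ ∫ s in Ioo a t, φ s / s :=
    setIntegral_mono_on hint_c hint_at measurableSet_Ioo hpt
  have hsub_int : (∫ s in Ioo a t, φ s / s) ≤ ∫ s in Ioo (0:ℝ) t, φ s / s := by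
    apply setIntegral_mono_set hint_t
    · filter_upwards [ae_restrict_mem measurableSet_Ioo] with s hs
      exact le_of_lt (div_pos (hpos s ⟨hs.1, hs.2.trans ht1⟩) hs.1)
    · exact HasSubset.Subset.eventuallyLE hIsub
  have hfin : φ a * (2 * C) ≤ C * φ t := by
    have h1 : φ a * (2 * C) ≤ φ a * (- Real.log s₀) := by nlinarith
    calc φ a * (2 * C) ≤ φ a * (- Real.log s₀) := h1
      _ = ∫ s in Ioo a t, φ a / s := hval.symm
      _ ≤ ∫ s in Ioo a t, φ s / s := hmono_int
      _ ≤ ∫ s in Ioo (0:ℝ) t, φ s / s := hsub_int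
      _ ≤ C * φ t := hbound t ⟨ht0, ht1⟩
  nlinarith
end
end

section
/- Let C > 0, let ψ : (0,1) → (0,∞) be decreasing and satisfy ∫ₜ¹ ψ(s)/s ds ≤ C·ψ(t) for all t ∈ (0,1), and let s₀ > e^{2C}. Then ψ(s₀·t) < ψ(t)/2 for every t ∈ (0, 1/s₀). -/
open MeasureTheory Set

/-!
For `t < u := s₀ t < 1`, monotonicity of `ψ` gives
`ψ(u) log s₀ = ∫ₜᵘ ψ(u)/s ds ≤ ∫ₜᵘ ψ(s)/s ds ≤ ∫ₜ¹ ψ(s)/s ds ≤ C ψ(t)`,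
and `log s₀ > 2C` turns this into `ψ(u) < ψ(t)/2`.
-/

theorem integrableOn_Ioo_const_div {a b : ℝ} (c : ℝ) (ha : 0 < a) :
    IntegrableOn (fun s => c / s) (Ioo a b) :=
  (continuousOn_const.div continuousOn_id fun _ hx => (ha.trans_le hx.1).ne').integrableOn_Icc
    |>.mono_set Ioo_subset_Icc_self

theorem setIntegral_Ioo_const_div {a b : ℝ} (c : ℝ) (ha : 0 < a) (hab : a ≤ b) :
    ∫ s in Ioo a b, c / s = c * Real.log (b / a) := by
  simp only [div_eq_mul_inv c]
  rw [integral_const_mul, ← integral_Ioc_eq_integral_Ioo, ← intervalIntegral.integral_of_le hab,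
    integral_inv_of_pos ha (ha.trans_le hab)]

theorem AntitoneOn.mul_log_div_le_setIntegral_Ioo_div {ψ : ℝ → ℝ} {a b : ℝ} (ha : 0 < a)
    (hab : a ≤ b) (hψ : AntitoneOn ψ (Ioc a b))
    (hint : IntegrableOn (fun s => ψ s / s) (Ioo a b)) :
    ψ b * Real.log (b / a) ≤ ∫ s in Ioo a b, ψ s / s := by
  rw [← setIntegral_Ioo_const_div _ ha hab]
  refine setIntegral_mono_on (integrableOn_Ioo_const_div _ ha) hint measurableSet_Ioo
    fun s hs => ?_
  have hψs : ψ b ≤ ψ s :=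
    hψ (Ioo_subset_Ioc_self hs) (right_mem_Ioc.2 (hs.1.trans hs.2)) hs.2.le
  exact div_le_div_of_nonneg_right hψs (ha.trans hs.1).le

/-- If `ψ` is positive and decreasing on `(0,1)` with `∫ₜ¹ ψ(s)/s ds ≤ C ψ(t)` for all
`t ∈ (0,1)`, and `s₀ > e^{2C}`, then `ψ(s₀ t) < ψ(t)/2` for every `t ∈ (0, 1/s₀)`. -/
theorem decreasing_cesaro_contraction
    (C : ℝ) (hC : 0 < C) (ψ : ℝ → ℝ)
    (hanti : AntitoneOn ψ (Ioo 0 1))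
    (hpos : ∀ t ∈ Ioo (0:ℝ) 1, 0 < ψ t)
    (hint : ∀ t ∈ Ioo (0:ℝ) 1, IntegrableOn (fun s => ψ s / s) (Ioo t 1))
    (hbound : ∀ t ∈ Ioo (0:ℝ) 1, (∫ s in Ioo t 1, ψ s / s) ≤ C * ψ t)
    (s₀ : ℝ) (hs₀ : Real.exp (2 * C) < s₀) :
    ∀ t : ℝ, 0 < t → t < 1 / s₀ → ψ (s₀ * t) < ψ t / 2 := by
  intro t ht ht'
  have hs₀_gt_one : 1 < s₀ := (Real.one_lt_exp_iff.2 (by positivity)).trans hs₀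
  have htu : t < s₀ * t := lt_mul_left ht hs₀_gt_one
  have hu1 : s₀ * t < 1 := by rwa [lt_div_iff₀' (by positivity)] at ht'
  have htmem : t ∈ Ioo (0:ℝ) 1 := ⟨ht, htu.trans hu1⟩
  have hsub : Ioo t (s₀ * t) ⊆ Ioo t 1 := Ioo_subset_Ioo_right hu1.le
  have key : ψ (s₀ * t) * Real.log s₀ ≤ C * ψ t := calc
    ψ (s₀ * t) * Real.log s₀ = ψ (s₀ * t) * Real.log (s₀ * t / t) := by
      rw [mul_div_cancel_right₀ _ ht.ne']
    _ ≤ ∫ s in Ioo t (s₀ * t), ψ s / s :=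
      (hanti.mono fun s hs => ⟨ht.trans hs.1, hs.2.trans_lt hu1⟩)
        |>.mul_log_div_le_setIntegral_Ioo_div ht htu.le ((hint t htmem).mono_set hsub)
    _ ≤ ∫ s in Ioo t 1, ψ s / s := by
      refine setIntegral_mono_set (hint t htmem) ?_ hsub.eventuallyLE
      filter_upwards [ae_restrict_mem measurableSet_Ioo] with s hs
      exact div_nonneg (hpos s ⟨ht.trans hs.1, hs.2⟩).le (ht.trans hs.1).le
    _ ≤ C * ψ t := hbound t htmem
  have hlog : 2 * C < Real.log s₀ := (Real.lt_log_iff_exp_lt (by positivity)).2 hs₀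
  nlinarith [hpos _ ⟨ht.trans htu, hu1⟩]
end

section
/- Let (h_k) be a sequence of pairwise disjoint measurable subsets of (0,1) with λ(h_k) = 2^{−k−2^k} for k ≥ 1, and let x = ∑_{k≥1} 2^{2^k} χ_{h_k}. Then there is a constant C > 0 such that C⁻¹/log(e/t) ≤ ∫₀¹ min{x(s), t·x(s)²} ds ≤ C/log(e/t) for all 0 < t ≤ 1. -/
/-!
On `h (i+1)` the function `x` equals `2^{2^{i+1}}`, so the integral is the series
`∑ᵢ 2^{-(i+1)} min(1, t 2^{2^{i+1}})`. Let `n` be the first index with `t 2^{2^{n+1}} ≥ 1`.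
Before `n` the terms are bounded by `t 2^{2^{i+1}} / 2^{i+1}`, which at least doubles from one
index to the next, so their sum is at most twice the last bound, i.e. `≤ 2^{1-n}`. From `n` on the
terms are at most `2^{-(i+1)}`, summing to `2^{-n}`, and the term `n` itself equals `2^{-(n+1)}`.
By the choice of `n`, `2^n` is comparable to `log₂(1/t) + 1`, hence to `log(e/t)`.
-/

open MeasureTheory Set

noncomputable section

theorem tsum_indicator_apply_of_mem {ι α β : Type*} [AddCommMonoid β] [TopologicalSpace β]
    {s : ι → Set α} (hs : Pairwise (Function.onFun Disjoint s)) (f : ι → α → β) {i : ι} {a : α}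
    (ha : a ∈ s i) : ∑' j, (s j).indicator (f j) a = f i a := by
  rw [tsum_eq_single i fun j hj => indicator_of_notMem (disjoint_right.mp (hs hj) ha) _,
    indicator_of_mem ha]

theorem comp_tsum_indicator_apply {ι α β γ : Type*} [AddCommMonoid β] [TopologicalSpace β]
    [AddCommMonoid γ] [TopologicalSpace γ]
    {s : ι → Set α} (hs : Pairwise (Function.onFun Disjoint s)) (f : ι → α → β) {φ : β → γ}
    (hφ : φ 0 = 0) (a : α) :
    φ (∑' j, (s j).indicator (f j) a) = ∑' j, (s j).indicator (fun b => φ (f j b)) a := by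
  by_cases ha : ∃ i, a ∈ s i
  · obtain ⟨i, hi⟩ := ha
    rw [tsum_indicator_apply_of_mem hs _ hi, tsum_indicator_apply_of_mem hs _ hi]
  · push Not at ha
    simp [indicator_of_notMem (ha _), hφ]

theorem integral_tsum_indicator_const {α ι E : Type*} [MeasurableSpace α] [Countable ι]
    [NormedAddCommGroup E] [NormedSpace ℝ E] [CompleteSpace E]
    {μ : Measure α} [IsFiniteMeasure μ] {s : ι → Set α} (hs : ∀ i, MeasurableSet (s i))
    {c : ι → E} (hc : Summable fun i => μ.real (s i) * ‖c i‖) :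
    ∫ a, ∑' i, (s i).indicator (fun _ => c i) a ∂μ = ∑' i, μ.real (s i) • c i := by
  rw [← integral_tsum_of_summable_integral_norm]
  · simp_rw [integral_indicator_const _ (hs _)]
  · exact fun i => (integrable_const (c i)).indicator (hs i)
  · simpa [norm_indicator_eq_indicator_norm, integral_indicator_const _ (hs _)] using hc

theorem Finset.sum_range_le_of_add_self_le {M : Type*} [AddCommMonoid M] [PartialOrder M]
    [IsOrderedAddMonoid M] {b : ℕ → M} (h0 : 0 ≤ b 0) (hb : ∀ n, b n + b n ≤ b (n + 1))
    (n : ℕ) : ∑ i ∈ Finset.range n, b i ≤ b n := by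
  induction n with
  | zero => simpa using h0
  | succ n ih =>
    rw [Finset.sum_range_succ]
    exact (add_le_add_left ih _).trans (hb n)

theorem two_pow_two_pow_div_add_self_le (n : ℕ) :
    (2:ℝ) ^ 2 ^ (n + 1) / 2 ^ (n + 1) + 2 ^ 2 ^ (n + 1) / 2 ^ (n + 1) ≤
      2 ^ 2 ^ (n + 2) / 2 ^ (n + 2) := by
  have h4 : (4:ℝ) ≤ 2 ^ 2 ^ (n + 1) := by
    calc (4:ℝ) = 2 ^ 2 ^ 1 := by norm_num
      _ ≤ 2 ^ 2 ^ (n + 1) :=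
        pow_le_pow_right₀ one_le_two (Nat.pow_le_pow_right two_pos (by omega))
  rw [pow_succ 2 (n + 1), pow_mul, pow_succ (2:ℝ) (n + 1), ← add_div,
    div_le_div_iff₀ (by positivity) (by positivity)]
  have := mul_le_mul_of_nonneg_left h4 (by positivity : (0:ℝ) ≤ 2 ^ 2 ^ (n + 1) * 2 ^ (n + 1))
  nlinarith

theorem two_rpow_two_rpow_natCast (n : ℕ) : (2:ℝ) ^ ((2:ℝ) ^ (n:ℝ)) = 2 ^ 2 ^ n := by
  rw [Real.rpow_natCast, ← Nat.cast_ofNat, ← Nat.cast_pow, Real.rpow_natCast]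

/-- `sharpnessTerm t i = ∫_{h (i+1)} min (x, t x²)`, since `x = 2^{2^{i+1}}` there. -/
def sharpnessTerm (t : ℝ) (i : ℕ) : ℝ := min 1 (t * 2 ^ 2 ^ (i + 1)) / 2 ^ (i + 1)

section
variable {t : ℝ}

theorem sharpnessTerm_nonneg (ht : 0 ≤ t) (i : ℕ) : 0 ≤ sharpnessTerm t i := by
  unfold sharpnessTerm; positivity

theorem sharpnessTerm_le (i : ℕ) : sharpnessTerm t i ≤ 1 / 2 / 2 ^ i := by
  rw [div_div, ← pow_succ']
  exact div_le_div_of_nonneg_right (min_le_left _ _) (by positivity)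

theorem summable_sharpnessTerm (ht : 0 ≤ t) : Summable (sharpnessTerm t) :=
  (summable_geometric_two' 1).of_nonneg_of_le (sharpnessTerm_nonneg ht) sharpnessTerm_le

theorem integral_min_eq_tsum_sharpnessTerm
    (h : ℕ → Set ℝ)
    (hmeas : ∀ k, MeasurableSet (h k))
    (hsub : ∀ k, h k ⊆ Ioo (0:ℝ) 1)
    (hdisj : Pairwise (Function.onFun Disjoint h))
    (hvol : ∀ k : ℕ, 1 ≤ k →
      volume (h k) = ENNReal.ofReal ((2:ℝ) ^ (-(k:ℝ) - (2:ℝ) ^ (k:ℝ))))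
    (x : ℝ → ℝ)
    (hx : ∀ s, x s =
      ∑' k : ℕ, (2:ℝ) ^ ((2:ℝ) ^ ((k:ℝ) + 1)) * (h (k + 1)).indicator (fun _ => (1:ℝ)) s)
    (ht : 0 ≤ t) :
    ∫ s in Ioo (0:ℝ) 1, min (x s) (t * x s ^ 2) = ∑' i, sharpnessTerm t i := by
  set a : ℕ → ℝ := fun k => 2 ^ 2 ^ (k + 1)
  have hx' : ∀ s, x s = ∑' k, (h (k + 1)).indicator (fun _ => a k) s := fun s => by
    simp_rw [hx, ← Nat.cast_add_one, two_rpow_two_rpow_natCast, ← indicator_const_mul, mul_one]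
    rfl
  have hvol' : ∀ k,
      (volume.restrict (Ioo (0:ℝ) 1)).real (h (k + 1)) = (2 ^ (k + 1) * a k)⁻¹ := by
    intro k
    rw [measureReal_restrict_apply (hmeas _), inter_eq_self_of_subset_left (hsub _),
      measureReal_def, hvol _ k.succ_pos, ENNReal.toReal_ofReal (by positivity), sub_eq_add_neg,
      Real.rpow_add two_pos, Real.rpow_neg two_pos.le, Real.rpow_neg two_pos.le,
      two_rpow_two_rpow_natCast, Real.rpow_natCast, ← mul_inv]
  have hterm : ∀ k, (volume.restrict (Ioo (0:ℝ) 1)).real (h (k + 1)) • min (a k) (t * a k ^ 2) =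
      sharpnessTerm t k := by
    intro k
    have hmin : min (a k) (t * a k ^ 2) = a k * min 1 (t * a k) := by
      rw [mul_min_of_nonneg _ _ (by positivity : (0:ℝ) ≤ a k)]
      ring_nf
    have ha : a k ≠ 0 := by positivity
    rw [hvol', smul_eq_mul, hmin, sharpnessTerm]
    field_simp
    rw [mul_comm (a k)]
  simp_rw [hx', comp_tsum_indicator_apply (hdisj.comp_of_injective (add_left_injective 1)) _
    (φ := fun y => min y (t * y ^ 2)) (by simp)]
  rw [integral_tsum_indicator_const (fun k => hmeas _)]
  · simp_rw [hterm]
  · refine (summable_sharpnessTerm ht).congr fun k => ?_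
    rw [← hterm, smul_eq_mul, Real.norm_of_nonneg (by positivity)]

theorem sum_range_sharpnessTerm_le (ht : 0 ≤ t) {n : ℕ}
    (hn : ∀ i < n, t * 2 ^ 2 ^ (i + 1) ≤ 1) :
    ∑ i ∈ Finset.range n, sharpnessTerm t i ≤ 2 / 2 ^ n := by
  cases n with
  | zero => norm_num
  | succ m =>
    have hsum := Finset.sum_range_le_of_add_self_le
      (b := fun i => (2:ℝ) ^ 2 ^ (i + 1) / 2 ^ (i + 1)) (by positivity)
      two_pow_two_pow_div_add_self_le m
    calc ∑ i ∈ Finset.range (m + 1), sharpnessTerm t i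
        ≤ ∑ i ∈ Finset.range (m + 1), t * (2 ^ 2 ^ (i + 1) / 2 ^ (i + 1)) :=
          Finset.sum_le_sum fun i _ => by
            rw [sharpnessTerm, mul_div_assoc']
            exact div_le_div_of_nonneg_right (min_le_right _ _) (by positivity)
      _ = t * (∑ i ∈ Finset.range m, 2 ^ 2 ^ (i + 1) / 2 ^ (i + 1) +
            2 ^ 2 ^ (m + 1) / 2 ^ (m + 1)) := by
          rw [← Finset.mul_sum, Finset.sum_range_succ]
      _ ≤ t * (2 * (2 ^ 2 ^ (m + 1) / 2 ^ (m + 1))) := by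
          gcongr; linarith
      _ = 2 * (t * 2 ^ 2 ^ (m + 1)) / 2 ^ (m + 1) := by ring
      _ ≤ 2 / 2 ^ (m + 1) := by
          gcongr; linarith [hn m (by omega)]

theorem tsum_sharpnessTerm_add_le (ht : 0 ≤ t) (n : ℕ) :
    ∑' i, sharpnessTerm t (i + n) ≤ 1 / 2 ^ n := by
  calc ∑' i, sharpnessTerm t (i + n) ≤ ∑' i : ℕ, 1 / 2 ^ n / 2 / 2 ^ i :=
        ((summable_nat_add_iff n).mpr (summable_sharpnessTerm ht)).tsum_le_tsum
          (fun i => (sharpnessTerm_le _).trans_eq (by ring)) (summable_geometric_two' _)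
    _ = 1 / 2 ^ n := tsum_geometric_two' _

theorem tsum_sharpnessTerm_le (ht : 0 ≤ t) {n : ℕ} (hn : ∀ i < n, t * 2 ^ 2 ^ (i + 1) ≤ 1) :
    ∑' i, sharpnessTerm t i ≤ 3 / 2 ^ n := by
  rw [← (summable_sharpnessTerm ht).sum_add_tsum_nat_add n]
  have h3 : (3:ℝ) / 2 ^ n = 2 / 2 ^ n + 1 / 2 ^ n := by ring
  linarith [sum_range_sharpnessTerm_le ht hn, tsum_sharpnessTerm_add_le ht n]

theorem le_tsum_sharpnessTerm (ht : 0 ≤ t) {n : ℕ} (hn : 1 ≤ t * 2 ^ 2 ^ (n + 1)) :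
    1 / 2 ^ (n + 1) ≤ ∑' i, sharpnessTerm t i := by
  calc 1 / 2 ^ (n + 1) = sharpnessTerm t n := by rw [sharpnessTerm, min_eq_left hn]
    _ ≤ _ := (summable_sharpnessTerm ht).le_tsum n fun i _ => sharpnessTerm_nonneg ht i

theorem one_le_mul_two_pow_iff (ht : 0 < t) (N : ℕ) :
    1 ≤ t * 2 ^ N ↔ -Real.log t ≤ N * Real.log 2 := by
  rw [← Real.log_nonneg_iff (by positivity), Real.log_mul ht.ne' (by positivity), Real.log_pow]
  constructor <;> intro <;> linarith

theorem exists_first_one_le_mul_two_pow_two_pow (ht : 0 < t) :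
    ∃ n : ℕ, 1 ≤ t * 2 ^ 2 ^ (n + 1) ∧ ∀ i < n, t * 2 ^ 2 ^ (i + 1) < 1 := by
  have hex : ∃ n : ℕ, 1 ≤ t * 2 ^ 2 ^ (n + 1) := by
    obtain ⟨n, hn⟩ := pow_unbounded_of_one_lt t⁻¹ one_lt_two
    refine ⟨n, ?_⟩
    calc 1 ≤ t * 2 ^ n := ((inv_lt_iff_one_lt_mul₀' ht).mp hn).le
      _ ≤ t * 2 ^ 2 ^ (n + 1) := by
        gcongr
        · exact one_le_two
        · exact (Nat.lt_two_pow_self).le.trans (Nat.pow_le_pow_right two_pos n.le_succ)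
  classical
  exact ⟨Nat.find hex, Nat.find_spec hex, fun i hi => not_le.mp (Nat.find_min hex hi)⟩

theorem tsum_sharpnessTerm_bounds (ht : 0 < t) (ht1 : t ≤ 1) :
    9⁻¹ / Real.log (Real.exp 1 / t) ≤ ∑' i, sharpnessTerm t i ∧
      ∑' i, sharpnessTerm t i ≤ 9 / Real.log (Real.exp 1 / t) := by
  obtain ⟨n, hfirst, hbefore⟩ := exists_first_one_le_mul_two_pow_two_pow ht
  rw [Real.log_div (Real.exp_ne_zero 1) ht.ne', Real.log_exp]
  have hlog_t : Real.log t ≤ 0 := Real.log_nonpos ht.le ht1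
  have hlog2 : Real.log 2 < 1 := by linarith [Real.log_two_lt_d9]
  have hlog2' : 1 / 2 < Real.log 2 := by linarith [Real.log_two_gt_d9]
  have hpow : (1:ℝ) ≤ 2 ^ n := one_le_pow₀ one_le_two
  have hupper : 1 - Real.log t ≤ 3 * 2 ^ n := by
    have h := (one_le_mul_two_pow_iff ht _).mp hfirst
    push_cast at h
    have := mul_le_mul_of_nonneg_left hlog2.le (by positivity : (0:ℝ) ≤ 2 ^ (n + 1))
    rw [pow_succ] at h this
    linarith
  have hlower : 2 ^ (n + 1) ≤ 4 * (1 - Real.log t) := by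
    cases n with
    | zero => norm_num; linarith
    | succ m =>
      have h := (one_le_mul_two_pow_iff ht _).not.mp (hbefore m (by omega)).not_ge
      push_cast at h
      have := mul_lt_mul_of_pos_left hlog2' (by positivity : (0:ℝ) < 2 ^ (m + 1))
      rw [pow_succ 2 (m + 1)]
      linarith
  constructor
  · calc 9⁻¹ / (1 - Real.log t) ≤ 1 / 2 ^ (n + 1) := by
          rw [div_le_div_iff₀ (by linarith) (by positivity)]; linarith
      _ ≤ _ := le_tsum_sharpnessTerm ht.le hfirst
  · calc _ ≤ 3 / 2 ^ n := tsum_sharpnessTerm_le ht.le fun i hi => (hbefore i hi).le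
      _ ≤ 9 / (1 - Real.log t) := by
          rw [div_le_div_iff₀ (by positivity) (by linarith)]; linarith

end

/-- Let `(h_k)_{k≥1}` be pairwise disjoint measurable subsets of `(0,1)` with
`λ(h_k) = 2^{-k-2^k}`, and `x = ∑_{k≥1} 2^{2^k} χ_{h_k}`. Then
`∫₀¹ min{x(s), t x(s)²} ds ∼ 1/log(e/t)` for `0 < t ≤ 1`. -/
theorem sharpness_integral_x
    (h : ℕ → Set ℝ)
    (hmeas : ∀ k, MeasurableSet (h k))
    (hsub : ∀ k, h k ⊆ Ioo (0:ℝ) 1)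
    (hdisj : Pairwise (Function.onFun Disjoint h))
    (hvol : ∀ k : ℕ, 1 ≤ k →
      volume (h k) = ENNReal.ofReal ((2:ℝ) ^ (-(k:ℝ) - (2:ℝ) ^ (k:ℝ))))
    (x : ℝ → ℝ)
    (hx : ∀ s, x s =
      ∑' k : ℕ, (2:ℝ) ^ ((2:ℝ) ^ ((k:ℝ) + 1)) * (h (k + 1)).indicator (fun _ => (1:ℝ)) s) :
    ∃ C > (0:ℝ), ∀ t : ℝ, 0 < t → t ≤ 1 →
      C⁻¹ / Real.log (Real.exp 1 / t) ≤ (∫ s in Ioo (0:ℝ) 1, min (x s) (t * x s ^ 2)) ∧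
        (∫ s in Ioo (0:ℝ) 1, min (x s) (t * x s ^ 2)) ≤ C / Real.log (Real.exp 1 / t) := by
  refine ⟨9, by norm_num, fun t ht ht1 => ?_⟩
  rw [integral_min_eq_tsum_sharpnessTerm h hmeas hsub hdisj hvol x hx ht.le]
  exact tsum_sharpnessTerm_bounds ht ht1
end
end

section
/- Let (g_k) be a sequence of pairwise disjoint measurable subsets of (0,1) with λ(g_k) = 4^{−k−4^k} for k ≥ 1, and let y = ∑_{k≥1} 4^{4^k} χ_{g_k}. Then there is a constant C > 0 such that C⁻¹/log(e/t) ≤ ∫₀¹ min{y(s), t·y(s)²} ds ≤ C/log(e/t) for all 0 < t ≤ 1. -/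
/-!
On `g (k + 1)` the integrand equals `4 ^ 4 ^ (k + 1) * min 1 (t * 4 ^ 4 ^ (k + 1))`, and
`4 ^ 4 ^ (k + 1)` times the measure of `g (k + 1)` is `4⁻¹ ^ (k + 1)`, so the integral is the
series `∑ₖ 4⁻¹ ^ (k + 1) * min 1 (t * 4 ^ 4 ^ (k + 1))`. Because of the doubly exponential growth
only one scale matters: if `t * 4 ^ 4 ^ N ≤ 4 ≤ 4 * t * 4 ^ 4 ^ (N + 1)`, the terms below `N` are
negligible and those from `N` on form a geometric tail, so the series is comparable to `4⁻¹ ^ N`,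
while `log (e / t)` is comparable to `4 ^ N`.
-/

open MeasureTheory Set Function
open scoped ENNReal

section DisjointIndicators

variable {α : Type*} {G : ℕ → Set α} {c : ℕ → ℝ} {x : α}

lemma tsum_mul_indicator_of_mem (hG : Pairwise (Disjoint on G)) {m : ℕ} (hx : x ∈ G m) :
    ∑' k, c k * (G k).indicator (fun _ => (1:ℝ)) x = c m := by
  rw [tsum_eq_single m fun k hk => ?_, indicator_of_mem hx, mul_one]
  rw [indicator_of_notMem fun hxk => (hG hk).le_bot ⟨hxk, hx⟩, mul_zero]

lemma tsum_mul_indicator_of_forall_notMem (hx : ∀ k, x ∉ G k) :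
    ∑' k, c k * (G k).indicator (fun _ => (1:ℝ)) x = 0 := by
  simp [indicator_of_notMem (hx _)]

lemma comp_tsum_mul_indicator (hG : Pairwise (Disjoint on G)) {φ : ℝ → ℝ} (hφ : φ 0 = 0) :
    φ (∑' k, c k * (G k).indicator (fun _ => (1:ℝ)) x) =
      ∑' k, φ (c k) * (G k).indicator (fun _ => (1:ℝ)) x := by
  by_cases hx : ∃ m, x ∈ G m
  · obtain ⟨m, hm⟩ := hx
    rw [tsum_mul_indicator_of_mem hG hm, tsum_mul_indicator_of_mem hG hm]
  · push Not at hx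
    rw [tsum_mul_indicator_of_forall_notMem hx, tsum_mul_indicator_of_forall_notMem hx, hφ]

lemma integral_tsum_mul_indicator [MeasurableSpace α] {μ : Measure α}
    (hG : ∀ k, MeasurableSet (G k)) (hc : ∑' k, ‖c k‖ₑ * μ (G k) ≠ ∞) :
    ∫ x, ∑' k, c k * (G k).indicator (fun _ => (1:ℝ)) x ∂μ = ∑' k, c k * μ.real (G k) := by
  have hind : ∀ k x, c k * (G k).indicator (fun _ => (1:ℝ)) x =
      (G k).indicator (fun _ => c k) x := fun k x => by
    by_cases hx : x ∈ G k <;> simp [hx]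
  simp_rw [hind]
  rw [integral_tsum (fun k => (aestronglyMeasurable_const.indicator (hG k))) ?_]
  · simp_rw [integral_indicator_const _ (hG _), smul_eq_mul, mul_comm]
  · simpa [enorm_indicator_eq_indicator_enorm, lintegral_indicator_const (hG _)] using hc

end DisjointIndicators

lemma one_le_log_four : 1 ≤ Real.log 4 := by
  rw [Real.le_log_iff_exp_le (by norm_num)]
  exact Real.exp_one_lt_d9.le.trans (by norm_num)

lemma log_four_le_three : Real.log 4 ≤ 3 := by
  linarith [Real.log_le_sub_one_of_pos (by norm_num : (0:ℝ) < 4)]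

lemma log_exp_one_div {t : ℝ} (ht : 0 < t) : Real.log (Real.exp 1 / t) = 1 - Real.log t := by
  rw [Real.log_div (Real.exp_ne_zero 1) ht.ne', Real.log_exp]

lemma log_mul_four_pow_pow {t : ℝ} (ht : 0 < t) (n : ℕ) :
    Real.log (t * 4 ^ 4 ^ n) = Real.log t + 4 ^ n * Real.log 4 := by
  rw [Real.log_mul ht.ne' (by positivity), Real.log_pow]
  push_cast; rfl

lemma four_rpow_four_rpow (n : ℕ) : (4:ℝ) ^ (4:ℝ) ^ (n:ℝ) = 4 ^ 4 ^ n := by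
  rw [Real.rpow_natCast]; exact_mod_cast Real.rpow_natCast 4 (4 ^ n)

lemma four_rpow_neg_sub_four_rpow (n : ℕ) :
    (4:ℝ) ^ (-(n:ℝ) - (4:ℝ) ^ (n:ℝ)) = (1 / 4) ^ n / 4 ^ 4 ^ n := by
  rw [Real.rpow_sub (by norm_num), Real.rpow_neg (by norm_num), four_rpow_four_rpow,
    Real.rpow_natCast, one_div, inv_pow]

lemma min_mul_sq_mul_div {a : ℝ} (ha : 0 < a) (t b : ℝ) :
    min a (t * a ^ 2) * (b / a) = b * min 1 (t * a) := by
  have hmin : min a (t * a ^ 2) = a * min 1 (t * a) := by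
    rw [mul_min_of_nonneg _ _ ha.le]; congr 1 <;> ring
  rw [hmin]
  field_simp

lemma summable_geometric_quarter_succ : Summable fun m : ℕ => (1 / 4 : ℝ) ^ (m + 1) :=
  (summable_nat_add_iff 1).mpr (summable_geometric_of_lt_one (by norm_num) (by norm_num))

lemma tsum_geometric_quarter_succ : ∑' m : ℕ, (1 / 4 : ℝ) ^ (m + 1) = 1 / 3 := by
  simp_rw [pow_succ, tsum_mul_right, tsum_geometric_of_lt_one (by norm_num : (0:ℝ) ≤ 1 / 4)
    (by norm_num)]
  norm_num

noncomputable def lacunaryTerm (t : ℝ) (m : ℕ) : ℝ :=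
  (1 / 4 : ℝ) ^ (m + 1) * min 1 (t * 4 ^ 4 ^ (m + 1))

section LacunarySum

variable {t : ℝ}

lemma lacunaryTerm_nonneg (ht : 0 ≤ t) (m : ℕ) : 0 ≤ lacunaryTerm t m :=
  mul_nonneg (by positivity) (le_min zero_le_one (by positivity))

lemma lacunaryTerm_le (m : ℕ) : lacunaryTerm t m ≤ (1 / 4) ^ (m + 1) :=
  mul_le_of_le_one_right (by positivity) (min_le_left _ _)

lemma summable_lacunaryTerm (ht : 0 ≤ t) : Summable (lacunaryTerm t) :=
  summable_geometric_quarter_succ.of_nonneg_of_le (lacunaryTerm_nonneg ht) lacunaryTerm_le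

lemma exists_lacunary_level (ht : 0 < t) (ht1 : t ≤ 1) :
    ∃ N : ℕ, t * 4 ^ 4 ^ N ≤ 4 ∧ 1 ≤ t * 4 ^ 4 ^ (N + 1) := by
  classical
  have hex : ∃ n : ℕ, 1 ≤ t * 4 ^ 4 ^ (n + 1) := by
    obtain ⟨n, hn⟩ := pow_unbounded_of_one_lt t⁻¹ (by norm_num : (1:ℝ) < 4)
    have hpow : (4:ℝ) ^ n ≤ 4 ^ 4 ^ (n + 1) :=
      pow_le_pow_right₀ (by norm_num)
        ((Nat.lt_pow_self (by norm_num)).le.trans (Nat.pow_le_pow_right (by norm_num) n.le_succ))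
    exact ⟨n, by rw [← inv_mul_le_iff₀ ht, mul_one]; linarith⟩
  refine ⟨Nat.find hex, ?_, Nat.find_spec hex⟩
  rcases hN : Nat.find hex with _ | n
  · norm_num; linarith
  · have := Nat.find_min hex (show n < Nat.find hex by omega)
    linarith

lemma four_pow_le_log_exp_one_div (ht : 0 < t) {N : ℕ} (hN : t * 4 ^ 4 ^ N ≤ 4) :
    (4:ℝ) ^ N ≤ Real.log (Real.exp 1 / t) := by
  have hlog := Real.log_le_log (by positivity) hN
  rw [log_mul_four_pow_pow ht, log_exp_one_div ht] at *
  nlinarith [one_le_log_four, one_le_pow₀ (by norm_num : (1:ℝ) ≤ 4) (n := N)]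

lemma log_exp_one_div_le (ht : 0 < t) {N : ℕ} (hN : 1 ≤ t * 4 ^ 4 ^ (N + 1)) :
    Real.log (Real.exp 1 / t) ≤ 4 * 4 ^ (N + 1) := by
  have hlog := Real.log_le_log zero_lt_one hN
  rw [Real.log_one, log_mul_four_pow_pow ht] at hlog
  rw [log_exp_one_div ht]
  nlinarith [log_four_le_three, one_le_pow₀ (by norm_num : (1:ℝ) ≤ 4) (n := N + 1)]

lemma quarter_pow_le_tsum_lacunaryTerm (ht : 0 ≤ t) {N : ℕ} (hN : 1 ≤ t * 4 ^ 4 ^ (N + 1)) :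
    (1 / 4 : ℝ) ^ (N + 1) ≤ ∑' m, lacunaryTerm t m := by
  have hterm : lacunaryTerm t N = (1 / 4) ^ (N + 1) := by
    rw [lacunaryTerm, min_eq_left hN, mul_one]
  exact hterm ▸ (summable_lacunaryTerm ht).le_tsum N fun m _ => lacunaryTerm_nonneg ht m

lemma lacunaryTerm_le_of_add_two_le (ht : 0 ≤ t) {N m : ℕ} (hN : t * 4 ^ 4 ^ N ≤ 4)
    (hm : m + 2 ≤ N) : lacunaryTerm t m ≤ (1 / 4) ^ (m + 1) * (1 / 4) ^ (N + 1) := by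
  refine mul_le_mul_of_nonneg_left ((min_le_right _ _).trans ?_) (by positivity)
  have hexp : 4 ^ (m + 1) + (N + 2) ≤ 4 ^ N := by
    obtain ⟨n, rfl⟩ : ∃ n, N = n + 1 := ⟨N - 1, by omega⟩
    have h1 : 4 ^ (m + 1) ≤ 4 ^ n := Nat.pow_le_pow_right (by norm_num) (by omega)
    have h2 : n < 4 ^ n := Nat.lt_pow_self (by norm_num)
    rw [pow_succ]
    omega
  have hpow : (4:ℝ) ^ 4 ^ (m + 1) * 4 ^ (N + 2) ≤ 4 ^ 4 ^ N := by
    rw [← pow_add]; exact pow_le_pow_right₀ (by norm_num) hexp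
  rw [div_pow, one_pow, le_div_iff₀ (by positivity)]
  calc t * 4 ^ 4 ^ (m + 1) * 4 ^ (N + 1) = t * (4 ^ 4 ^ (m + 1) * 4 ^ (N + 2)) / 4 := by ring
    _ ≤ t * 4 ^ 4 ^ N / 4 := by gcongr
    _ ≤ 1 := by linarith

lemma tsum_lacunaryTerm_le (ht : 0 ≤ t) {N : ℕ} (hN : t * 4 ^ 4 ^ N ≤ 4) :
    ∑' m, lacunaryTerm t m ≤ 6 * (1 / 4) ^ (N + 1) := by
  rw [← (summable_lacunaryTerm ht).sum_add_tsum_nat_add (N - 1)]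
  have hhead : ∑ m ∈ Finset.range (N - 1), lacunaryTerm t m ≤ 1 / 3 * (1 / 4) ^ (N + 1) := by
    calc ∑ m ∈ Finset.range (N - 1), lacunaryTerm t m
        ≤ ∑ m ∈ Finset.range (N - 1), (1 / 4 : ℝ) ^ (m + 1) * (1 / 4) ^ (N + 1) :=
          Finset.sum_le_sum fun m hm =>
            lacunaryTerm_le_of_add_two_le ht hN (by rw [Finset.mem_range] at hm; omega)
      _ ≤ 1 / 3 * (1 / 4) ^ (N + 1) := by
          rw [← Finset.sum_mul, ← tsum_geometric_quarter_succ]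
          gcongr
          exact summable_geometric_quarter_succ.sum_le_tsum _ fun m _ => by positivity
  have htail : ∑' i, lacunaryTerm t (i + (N - 1)) ≤ 16 / 3 * (1 / 4) ^ (N + 1) := by
    have hgeom := summable_geometric_of_lt_one (by norm_num : (0:ℝ) ≤ 1 / 4) (by norm_num)
    calc ∑' i, lacunaryTerm t (i + (N - 1)) ≤ ∑' i, (1 / 4 : ℝ) ^ N * (1 / 4) ^ i :=
          ((summable_nat_add_iff _).mpr (summable_lacunaryTerm ht)).tsum_le_tsum
            (fun i => (lacunaryTerm_le _).trans <| by
              rw [← pow_add]; exact pow_le_pow_of_le_one (by norm_num) (by norm_num) (by omega))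
            (hgeom.mul_left _)
      _ = 16 / 3 * (1 / 4) ^ (N + 1) := by
          rw [tsum_mul_left, tsum_geometric_of_lt_one (by norm_num) (by norm_num), pow_succ]
          ring
  linarith [(by positivity : (0:ℝ) ≤ (1 / 4) ^ (N + 1))]

theorem tsum_lacunaryTerm_bounds (ht : 0 < t) (ht1 : t ≤ 1) :
    24⁻¹ / Real.log (Real.exp 1 / t) ≤ ∑' m, lacunaryTerm t m ∧
      ∑' m, lacunaryTerm t m ≤ 24 / Real.log (Real.exp 1 / t) := by
  obtain ⟨N, hlow, hhigh⟩ := exists_lacunary_level ht ht1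
  have hL := four_pow_le_log_exp_one_div ht hlow
  have hL' := log_exp_one_div_le ht hhigh
  have hq : (1 / 4 : ℝ) ^ (N + 1) * 4 ^ N = 1 / 4 := by
    rw [div_pow, one_pow, pow_succ]; field_simp
  have hq0 : (0:ℝ) ≤ (1 / 4) ^ (N + 1) := by positivity
  have hLpos : 0 < Real.log (Real.exp 1 / t) := (pow_pos (by norm_num) N).trans_le hL
  constructor
  · rw [div_le_iff₀ hLpos]
    nlinarith [mul_le_mul_of_nonneg_left hL hq0,
      mul_le_mul_of_nonneg_right (quarter_pow_le_tsum_lacunaryTerm ht.le hhigh) hLpos.le]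
  · rw [le_div_iff₀ hLpos]
    rw [pow_succ] at hL'
    nlinarith [mul_le_mul_of_nonneg_right (tsum_lacunaryTerm_le ht.le hlow) hLpos.le,
      mul_le_mul_of_nonneg_left hL' hq0]

end LacunarySum

theorem setIntegral_min_eq_tsum_lacunaryTerm (g : ℕ → Set ℝ)
    (hmeas : ∀ k, MeasurableSet (g k)) (hsub : ∀ k, g k ⊆ Ioo (0:ℝ) 1)
    (hdisj : Pairwise (Function.onFun Disjoint g))
    (hvol : ∀ k : ℕ, 1 ≤ k →
      volume (g k) = ENNReal.ofReal ((4:ℝ) ^ (-(k:ℝ) - (4:ℝ) ^ (k:ℝ))))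
    (y : ℝ → ℝ) (hy : ∀ s, y s =
      ∑' k : ℕ, (4:ℝ) ^ ((4:ℝ) ^ ((k:ℝ) + 1)) * (g (k + 1)).indicator (fun _ => (1:ℝ)) s)
    {t : ℝ} (ht : 0 ≤ t) :
    ∫ s in Ioo (0:ℝ) 1, min (y s) (t * y s ^ 2) = ∑' m, lacunaryTerm t m := by
  have hy' : ∀ s, y s = ∑' m : ℕ, (4:ℝ) ^ 4 ^ (m + 1) * (g (m + 1)).indicator (fun _ => 1) s :=
    fun s => by simp_rw [hy s, ← Nat.cast_succ, four_rpow_four_rpow]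
  have hmass : ∀ m, (volume.restrict (Ioo (0:ℝ) 1)) (g (m + 1)) =
      ENNReal.ofReal ((1 / 4) ^ (m + 1) / 4 ^ 4 ^ (m + 1)) := fun m => by
    rw [Measure.restrict_eq_self _ (hsub _), hvol _ m.succ_pos, four_rpow_neg_sub_four_rpow]
  have hterm : ∀ m, min (4 ^ 4 ^ (m + 1)) (t * (4 ^ 4 ^ (m + 1)) ^ 2) *
      ((1 / 4 : ℝ) ^ (m + 1) / 4 ^ 4 ^ (m + 1)) = lacunaryTerm t m := fun m =>
    min_mul_sq_mul_div (by positivity) _ _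
  simp_rw [hy', comp_tsum_mul_indicator (hdisj.comp_of_injective (add_left_injective 1))
    (φ := fun r => min r (t * r ^ 2)) (by simp)]
  rw [integral_tsum_mul_indicator (fun m => hmeas _) ?_]
  · refine tsum_congr fun m => ?_
    rw [measureReal_def, hmass, ENNReal.toReal_ofReal (by positivity), hterm]
  · have hsummand : ∀ m, ‖min ((4:ℝ) ^ 4 ^ (m + 1)) (t * (4 ^ 4 ^ (m + 1)) ^ 2)‖ₑ *
        (volume.restrict (Ioo (0:ℝ) 1)) (g (m + 1)) = ENNReal.ofReal (lacunaryTerm t m) :=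
      fun m => by
        rw [Real.enorm_eq_ofReal (by positivity), hmass, ← ENNReal.ofReal_mul (by positivity),
          hterm]
    rw [tsum_congr hsummand, ← ENNReal.ofReal_tsum_of_nonneg (lacunaryTerm_nonneg ht)
      (summable_lacunaryTerm ht)]
    exact ENNReal.ofReal_ne_top

/-- Let `(g_k)_{k≥1}` be pairwise disjoint measurable subsets of `(0,1)` with
`λ(g_k) = 4^{-k-4^k}`, and `y = ∑_{k≥1} 4^{4^k} χ_{g_k}`. Then
`∫₀¹ min{y(s), t y(s)²} ds ∼ 1/log(e/t)` for `0 < t ≤ 1`. -/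
theorem sharpness_integral_y
    (g : ℕ → Set ℝ)
    (hmeas : ∀ k, MeasurableSet (g k))
    (hsub : ∀ k, g k ⊆ Ioo (0:ℝ) 1)
    (hdisj : Pairwise (Function.onFun Disjoint g))
    (hvol : ∀ k : ℕ, 1 ≤ k →
      volume (g k) = ENNReal.ofReal ((4:ℝ) ^ (-(k:ℝ) - (4:ℝ) ^ (k:ℝ))))
    (y : ℝ → ℝ)
    (hy : ∀ s, y s =
      ∑' k : ℕ, (4:ℝ) ^ ((4:ℝ) ^ ((k:ℝ) + 1)) * (g (k + 1)).indicator (fun _ => (1:ℝ)) s) :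
    ∃ C > (0:ℝ), ∀ t : ℝ, 0 < t → t ≤ 1 →
      C⁻¹ / Real.log (Real.exp 1 / t) ≤ (∫ s in Ioo (0:ℝ) 1, min (y s) (t * y s ^ 2)) ∧
        (∫ s in Ioo (0:ℝ) 1, min (y s) (t * y s ^ 2)) ≤ C / Real.log (Real.exp 1 / t) := by
  refine ⟨24, by norm_num, fun t ht ht1 => ?_⟩
  rw [setIntegral_min_eq_tsum_lacunaryTerm g hmeas hsub hdisj hvol y hy ht.le]
  exact tsum_lacunaryTerm_bounds ht ht1
end
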